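/- arXiv:0712.0585 — 3 statements merged into one kernel-verified Lean document; each statement's English description precedes it below -/
import Mathlib

section
/- The group of 2-cocycles on A = (ℤ/pℤ) × (ℤ/pℤ) with values in kˣ (under pointwise multiplication) modulo the subgroup of coboundaries is isomorphic, as a group, to ℤ/pℤ; i.e., H²((ℤ/pℤ)², kˣ) ≅ ℤ/pℤ. -/
/-!
The commutator pairing `β μ a b = μ a b / μ b a` of a 2-cocycle is an alternating
bimultiplicative form, so on `(ℤ/n)²` it is determined by the `n`-th root of unity
`β μ (1, 0) (0, 1)`, and every such root occurs, already for the bilinear cocycles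
`(a, b) ↦ χ (a.1 * b.2)`. Its kernel consists of the symmetric cocycles, and these are
coboundaries: a symmetric cocycle defines an abelian extension of `A` by `kˣ`, and this
extension splits because the divisible group `kˣ` is an injective `ℤ`-module.
-/

/-- The group of 2-cocycles on an abelian group `A` with values in `kˣ`
(trivial action), as a subgroup of the group of all functions `A → A → kˣ`
under pointwise multiplication. -/
def twoCocycles (A : Type*) [AddCommGroup A] (k : Type*) [Field k] :
    Subgroup (A → A → kˣ) where
  carrier := {μ | ∀ a b c : A, μ a b * μ (a + b) c = μ b c * μ a (b + c)}
  one_mem' := by intro a b c; simp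
  mul_mem' := by
    intro μ ν hμ hν a b c
    simp only [Pi.mul_apply]
    rw [mul_mul_mul_comm, hμ a b c, hν a b c, mul_mul_mul_comm]
  inv_mem' := by
    intro μ hμ a b c
    simp only [Pi.inv_apply]
    rw [← mul_inv, hμ a b c, mul_inv]

/-- The subgroup of coboundaries inside the group of 2-cocycles. -/
def twoCoboundaries (A : Type*) [AddCommGroup A] (k : Type*) [Field k] :
    Subgroup (twoCocycles A k) where
  carrier := {μ | ∃ f : A → kˣ,
    ∀ a b : A, (μ : A → A → kˣ) a b = f a * f b * (f (a + b))⁻¹}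
  one_mem' := ⟨1, by intro a b; simp⟩
  mul_mem' := by
    rintro μ ν ⟨f, hf⟩ ⟨g, hg⟩
    refine ⟨f * g, fun a b => ?_⟩
    have : ((μ * ν : twoCocycles A k) : A → A → kˣ) a b
        = (μ : A → A → kˣ) a b * (ν : A → A → kˣ) a b := rfl
    rw [this, hf, hg]
    simp only [Pi.mul_apply, mul_inv]
    simp [mul_comm, mul_left_comm, mul_assoc]
  inv_mem' := by
    rintro μ ⟨f, hf⟩
    refine ⟨f⁻¹, fun a b => ?_⟩
    have : ((μ⁻¹ : twoCocycles A k) : A → A → kˣ) a b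
        = ((μ : A → A → kˣ) a b)⁻¹ := rfl
    rw [this, hf]
    simp only [Pi.inv_apply, mul_inv, inv_inv]

open Function

section CommutatorPairing

variable {A G : Type*} [CommGroup G]

/-- For a cocycle `μ` this is the commutator of lifts of `a` and `b` in the central extension
of `A` by `G` defined by `μ`. -/
def commutatorPairing (μ : A → A → G) (a b : A) : G := μ a b / μ b a

theorem commutatorPairing_self (μ : A → A → G) (a : A) : commutatorPairing μ a a = 1 :=
  div_self' _

theorem commutatorPairing_swap (μ : A → A → G) (a b : A) :
    commutatorPairing μ b a = (commutatorPairing μ a b)⁻¹ :=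
  (inv_div _ _).symm

variable [AddCommGroup A]

def IsTwoCocycle (μ : A → A → G) : Prop :=
  ∀ a b c, μ a b * μ (a + b) c = μ b c * μ a (b + c)

namespace IsTwoCocycle

variable {μ : A → A → G} (hμ : IsTwoCocycle μ)
include hμ

theorem apply_zero_left (b : A) : μ 0 b = μ 0 0 := by
  have h := hμ 0 0 b
  rw [zero_add, zero_add] at h
  exact (mul_right_cancel h).symm

theorem apply_zero_right (a : A) : μ a 0 = μ 0 0 := by
  have h := hμ a 0 0
  rw [add_zero, add_zero] at h
  exact mul_right_cancel h

theorem commutatorPairing_zero_left (b : A) : commutatorPairing μ 0 b = 1 := by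
  rw [commutatorPairing, hμ.apply_zero_left, hμ.apply_zero_right b, div_self']

theorem commutatorPairing_add_left (a b c : A) :
    commutatorPairing μ (a + b) c = commutatorPairing μ a c * commutatorPairing μ b c := by
  have key : μ (a + b) c * (μ c a * μ c b) = μ a c * μ b c * μ c (a + b) := by
    refine mul_left_cancel (a := μ a b) ?_
    calc μ a b * (μ (a + b) c * (μ c a * μ c b))
        = μ b c * μ c a * (μ c b * μ a (c + b)) := by
          rw [← mul_assoc, hμ a b c, add_comm b c]; ac_rfl
      _ = μ a c * μ b c * (μ c a * μ (c + a) b) := by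
          rw [← hμ a c b, add_comm a c]; ac_rfl
      _ = μ a b * (μ a c * μ b c * μ c (a + b)) := by
          rw [hμ c a b]; ac_rfl
  rw [commutatorPairing, commutatorPairing, commutatorPairing, div_mul_div_comm,
    div_eq_div_iff_mul_eq_mul, key]

theorem commutatorPairing_add_right (a b c : A) :
    commutatorPairing μ a (b + c) = commutatorPairing μ a b * commutatorPairing μ a c := by
  rw [commutatorPairing_swap, hμ.commutatorPairing_add_left, mul_inv, ← commutatorPairing_swap,
    ← commutatorPairing_swap]

theorem commutatorPairing_nsmul_left (n : ℕ) (a b : A) :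
    commutatorPairing μ (n • a) b = commutatorPairing μ a b ^ n := by
  induction n with
  | zero => rw [zero_nsmul, pow_zero, hμ.commutatorPairing_zero_left]
  | succ n ih => rw [succ_nsmul, hμ.commutatorPairing_add_left, ih, pow_succ]

theorem commutatorPairing_nsmul_right (n : ℕ) (a b : A) :
    commutatorPairing μ a (n • b) = commutatorPairing μ a b ^ n := by
  rw [commutatorPairing_swap, hμ.commutatorPairing_nsmul_left, ← inv_pow,
    ← commutatorPairing_swap]

end IsTwoCocycle

theorem IsTwoCocycle.apply_comm_of_commutatorPairing_eq_one {n : ℕ} [NeZero n]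
    {μ : ZMod n × ZMod n → ZMod n × ZMod n → G} (hμ : IsTwoCocycle μ)
    (h : commutatorPairing μ (1, 0) (0, 1) = 1) (a b : ZMod n × ZMod n) : μ a b = μ b a := by
  have decomp (x : ZMod n × ZMod n) : x = x.1.val • (1, 0) + x.2.val • (0, 1) := by
    ext <;> simp
  have h' : commutatorPairing μ (0, 1) (1, 0) = 1 := by rw [commutatorPairing_swap, h, inv_one]
  rw [← div_eq_one, ← commutatorPairing, decomp a, decomp b]
  simp only [hμ.commutatorPairing_add_left, hμ.commutatorPairing_add_right,
    hμ.commutatorPairing_nsmul_left, hμ.commutatorPairing_nsmul_right, commutatorPairing_self, h,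
    h', one_pow, mul_one]

end CommutatorPairing

theorem MonoidHom.exists_comp_eq_id_of_divisible {G H : Type*} [CommGroup G] [CommGroup H]
    [DivisibleBy (Additive G) ℤ] (ι : G →* H) (hι : Injective ι) :
    ∃ r : H →* G, r.comp ι = MonoidHom.id G := by
  obtain ⟨r, hr⟩ := (Module.Baer.of_divisible (Additive G)).extension_property_addMonoidHom
    (MonoidHom.toAdditive ι) hι (AddMonoidHom.id _)
  exact ⟨MonoidHom.toAdditive.symm r, congrArg MonoidHom.toAdditive.symm hr⟩

structure SymmTwoCocycle (A G : Type*) [AddCommGroup A] [CommGroup G] where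
  toFun : A → A → G
  isTwoCocycle : IsTwoCocycle toFun
  symm : ∀ a b, toFun a b = toFun b a

namespace SymmTwoCocycle

variable {A G : Type*} [AddCommGroup A] [CommGroup G]

instance : CoeFun (SymmTwoCocycle A G) fun _ => A → A → G := ⟨toFun⟩

@[ext]
structure Extension (μ : SymmTwoCocycle A G) where
  fiber : G
  base : A

variable {μ : SymmTwoCocycle A G}

namespace Extension

instance : Mul μ.Extension :=
  ⟨fun x y => ⟨x.fiber * y.fiber * μ x.base y.base, x.base + y.base⟩⟩
instance : One μ.Extension := ⟨⟨(μ 0 0)⁻¹, 0⟩⟩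
instance : Inv μ.Extension :=
  ⟨fun x => ⟨(x.fiber * μ 0 0 * μ x.base (-x.base))⁻¹, -x.base⟩⟩

@[simp] theorem fiber_mul (x y : μ.Extension) :
    (x * y).fiber = x.fiber * y.fiber * μ x.base y.base := rfl
@[simp] theorem base_mul (x y : μ.Extension) : (x * y).base = x.base + y.base := rfl
@[simp] theorem fiber_one : (1 : μ.Extension).fiber = (μ 0 0)⁻¹ := rfl
@[simp] theorem base_one : (1 : μ.Extension).base = 0 := rfl
@[simp] theorem fiber_inv (x : μ.Extension) :
    x⁻¹.fiber = (x.fiber * μ 0 0 * μ x.base (-x.base))⁻¹ := rfl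
@[simp] theorem base_inv (x : μ.Extension) : x⁻¹.base = -x.base := rfl

instance : CommGroup μ.Extension where
  mul_assoc x y z := by
    ext
    · calc x.fiber * y.fiber * μ x.base y.base * z.fiber * μ (x.base + y.base) z.base
          = x.fiber * y.fiber * z.fiber * (μ x.base y.base * μ (x.base + y.base) z.base) := by
            ac_rfl
        _ = x.fiber * (y.fiber * z.fiber * μ y.base z.base) * μ x.base (y.base + z.base) := by
            rw [μ.isTwoCocycle]; ac_rfl
    · exact add_assoc _ _ _
  one_mul x := by
    ext
    · simp [μ.isTwoCocycle.apply_zero_left]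
    · exact zero_add _
  mul_one x := by
    ext
    · simp [μ.isTwoCocycle.apply_zero_right]
    · exact add_zero _
  inv_mul_cancel x := by
    ext
    · rw [fiber_mul, fiber_inv, base_inv, μ.symm (-x.base), fiber_one, mul_assoc,
        inv_mul_eq_iff_eq_mul, mul_right_comm _ (μ _ _), mul_inv_cancel_right]
    · exact neg_add_cancel _
  mul_comm x y := by
    ext
    · simp only [fiber_mul, μ.symm x.base, mul_comm x.fiber]
    · exact add_comm _ _

end Extension

variable (μ) in
def incl : G →* μ.Extension where
  toFun g := ⟨g / μ 0 0, 0⟩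
  map_one' := by ext <;> simp
  map_mul' g h := by
    ext
    · simp [div_eq_mul_inv, mul_comm, mul_left_comm, mul_assoc]
    · simp

theorem incl_injective : Injective μ.incl := fun _ _ h =>
  div_left_injective (congrArg Extension.fiber h)

theorem mk_one_mul_mk_one (a b : A) :
    (⟨1, a⟩ * ⟨1, b⟩ : μ.Extension) = μ.incl (μ a b) * ⟨1, a + b⟩ := by
  ext
  · simp [incl, μ.isTwoCocycle.apply_zero_left]
  · simp [incl]

/-- A retraction `r` of the extension onto `G` yields the trivialisation `a ↦ r ⟨1, a⟩`. -/
theorem exists_eq_coboundary [DivisibleBy (Additive G) ℤ] (μ : SymmTwoCocycle A G) :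
    ∃ f : A → G, ∀ a b, μ a b = f a * f b * (f (a + b))⁻¹ := by
  obtain ⟨r, hr⟩ := μ.incl.exists_comp_eq_id_of_divisible incl_injective
  refine ⟨fun a => r ⟨1, a⟩, fun a b => ?_⟩
  have h := congrArg r (mk_one_mul_mk_one (μ := μ) a b)
  rw [map_mul, map_mul, ← MonoidHom.comp_apply r, hr, MonoidHom.id_apply] at h
  rw [eq_mul_inv_iff_mul_eq, h]

end SymmTwoCocycle

theorem IsAlgClosed.units_pow_surjective {k : Type*} [Field k] [IsAlgClosed k] {n : ℕ}
    (hn : n ≠ 0) : Surjective fun x : kˣ => x ^ n := by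
  intro x
  obtain ⟨z, hz⟩ := IsAlgClosed.exists_pow_nat_eq (x : k) (Nat.pos_of_ne_zero hn)
  have hz0 : z ≠ 0 := by
    rintro rfl
    exact x.ne_zero (by rw [← hz, zero_pow hn])
  exact ⟨Units.mk0 z hz0, Units.ext (by simpa using hz)⟩

noncomputable instance {k : Type*} [Field k] [IsAlgClosed k] : DivisibleBy (Additive kˣ) ℤ :=
  letI : DivisibleBy (Additive kˣ) ℕ :=
    divisibleByOfSMulRightSurj _ _ fun hn => IsAlgClosed.units_pow_surjective hn
  AddGroup.divisibleByIntOfDivisibleByNat _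

section Field

variable {k : Type*} [Field k]

theorem IsTwoCocycle.of_mem_twoCocycles {A : Type*} [AddCommGroup A] {μ : A → A → kˣ}
    (hμ : μ ∈ twoCocycles A k) : IsTwoCocycle μ :=
  hμ

variable (k) in
def commutatorPairingHom {A : Type*} [AddCommGroup A] (a b : A) : twoCocycles A k →* kˣ where
  toFun μ := commutatorPairing (μ : A → A → kˣ) a b
  map_one' := div_one 1
  map_mul' _ _ := mul_div_mul_comm _ _ _ _

def bilinearCocycle {R : Type*} [Ring R] (χ : R →+ Additive kˣ) : twoCocycles (R × R) k :=
  ⟨fun a b => (χ (a.1 * b.2)).toMul, fun a b c => by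
    simp only [← toMul_add, ← map_add, Prod.fst_add, Prod.snd_add]
    congr 2
    noncomm_ring⟩

theorem commutatorPairingHom_bilinearCocycle {R : Type*} [Ring R] (χ : R →+ Additive kˣ) :
    commutatorPairingHom k (1, 0) (0, 1) (bilinearCocycle χ) = (χ 1).toMul := by
  simp [commutatorPairingHom, commutatorPairing, bilinearCocycle]

variable {n : ℕ} [NeZero n]

theorem ker_commutatorPairingHom [IsAlgClosed k] :
    (commutatorPairingHom k ((1, 0) : ZMod n × ZMod n) (0, 1)).ker =
      twoCoboundaries (ZMod n × ZMod n) k := by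
  ext μ
  constructor
  · intro hμ
    have hcoc := IsTwoCocycle.of_mem_twoCocycles μ.2
    exact SymmTwoCocycle.exists_eq_coboundary
      ⟨_, hcoc, hcoc.apply_comm_of_commutatorPairing_eq_one hμ⟩
  · rintro ⟨f, hf⟩
    change commutatorPairing (μ : ZMod n × ZMod n → ZMod n × ZMod n → kˣ) _ _ = 1
    rw [commutatorPairing, div_eq_one, hf, hf, add_comm, mul_comm (f _)]

theorem range_commutatorPairingHom {ζ : kˣ} (hζ : IsPrimitiveRoot ζ n) :
    (commutatorPairingHom k ((1, 0) : ZMod n × ZMod n) (0, 1)).range = Subgroup.zpowers ζ := by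
  apply le_antisymm
  · rintro _ ⟨μ, rfl⟩
    rw [hζ.zpowers_eq, mem_rootsOfUnity]
    change commutatorPairing (μ : ZMod n × ZMod n → ZMod n × ZMod n → kˣ) _ _ ^ n = 1
    have hcoc := IsTwoCocycle.of_mem_twoCocycles μ.2
    rw [← hcoc.commutatorPairing_nsmul_left, ← Nat.cast_smul_eq_nsmul (ZMod n),
      ZMod.natCast_self, zero_smul, hcoc.commutatorPairing_zero_left]
  · let χ : ZMod n →+ Additive kˣ :=
      (Subgroup.zpowers ζ).subtype.toAdditive.comp hζ.zmodEquivZPowers.toAddMonoidHom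
    refine Subgroup.zpowers_le.mpr ⟨bilinearCocycle χ, ?_⟩
    rw [commutatorPairingHom_bilinearCocycle]
    simpa [χ] using congrArg (fun x => ((Additive.toMul x : Subgroup.zpowers ζ) : kˣ))
      (hζ.zmodEquivZPowers_apply_coe_nat 1)

end Field

theorem stmt_8_general (p : ℕ) (hp : p.Prime)
    (k : Type*) [Field k] [IsAlgClosed k] [CharZero k] :
    Nonempty ((twoCocycles (ZMod p × ZMod p) k ⧸ twoCoboundaries (ZMod p × ZMod p) k)
      ≃* Multiplicative (ZMod p)) := by
  have : NeZero p := ⟨hp.ne_zero⟩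
  obtain ⟨ζ, hζ⟩ := HasEnoughRootsOfUnity.exists_primitiveRoot k p
  have hζ' := hζ.isUnit_unit hp.ne_zero
  let φ := commutatorPairingHom k ((1, 0) : ZMod p × ZMod p) (0, 1)
  exact ⟨(QuotientGroup.quotientMulEquivOfEq ker_commutatorPairingHom.symm).trans <|
    (QuotientGroup.quotientKerEquivRange φ).trans <|
    (MulEquiv.subgroupCongr (range_commutatorPairingHom hζ')).trans
      hζ'.zmodEquivZPowers.symm.toMultiplicativeRight⟩

/-- `H²((ℤ/pℤ)², kˣ) ≅ ℤ/pℤ`: the group of 2-cocycles on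
`A = (ℤ/pℤ)²` with values in `kˣ` modulo coboundaries is isomorphic to `ℤ/pℤ`. -/
theorem stmt_8 (p : ℕ) (hp : p.Prime) (hodd : Odd p)
    (k : Type*) [Field k] [IsAlgClosed k] [CharZero k] :
    Nonempty ((twoCocycles (ZMod p × ZMod p) k ⧸ twoCoboundaries (ZMod p × ZMod p) k)
      ≃* Multiplicative (ZMod p)) :=
  stmt_8_general p hp k
end

section
/- A subgroup N of G = D₂ₚ × ℤ/pℤ is normal and abelian if and only if N is one of the following four subgroups: the trivial subgroup, R × {0}, {1} × ℤ/pℤ, and R × ℤ/pℤ. In particular, G has exactly two normal subgroups of order p and its normal abelian subgroups have orders 1, p, p, and p². -/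
/-!
A normal abelian subgroup `N` of `D₂ₚ × ℤ/pℤ` contains no element `(s rⁱ, z)`: conjugating by the
rotation `r` turns it into `(s rⁱ⁻², z)`, and two such elements commute only if `r⁴ = 1`. So `N`
lies in `R × ℤ/pℤ`, on which the reflection acts by `(x, z) ↦ (x⁻¹, z)`. Multiplying `(x, z) ∈ N`
by its conjugate, or by the inverse of its conjugate, gives `(1, z²)` and `(x², 1)` in `N`, and
since every element has odd order `p` this puts `(1, z)` and `(x, 1)` in `N`. Hence `N` is the
product of a subgroup of `R` and a subgroup of `ℤ/pℤ`, each of which is trivial or everything,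
both groups having prime order.
-/

def rotations (n : ℕ) : Subgroup (DihedralGroup n) where
  carrier := Set.range DihedralGroup.r
  one_mem' := ⟨0, rfl⟩
  mul_mem' := by
    rintro _ _ ⟨i, rfl⟩ ⟨j, rfl⟩
    exact ⟨i + j, (DihedralGroup.r_mul_r i j).symm⟩
  inv_mem' := by
    rintro _ ⟨i, rfl⟩
    exact ⟨-i, rfl⟩

theorem ZMod.four_ne_zero_of_odd {n : ℕ} (hodd : Odd n) (hn : n ≠ 1) : (4 : ZMod n) ≠ 0 := by
  rw [show (4 : ZMod n) = ((2 ^ 2 : ℕ) : ZMod n) by norm_num, Ne, ZMod.natCast_eq_zero_iff]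
  exact fun h ↦ hn (((Nat.coprime_two_right.2 hodd).pow_right 2).eq_one_of_dvd h)

namespace Subgroup

section
variable {G : Type*} [Group G]

theorem eq_bot_or_eq_of_le_of_prime_card {H K : Subgroup G} (hK : (Nat.card K).Prime)
    (hle : H ≤ K) : H = ⊥ ∨ H = K := by
  have : Finite K := Nat.finite_of_card_ne_zero hK.ne_zero
  rcases (Nat.dvd_prime hK).1 (card_dvd_of_le hle) with h | h
  · exact .inl (card_eq_one.1 h)
  · exact .inr (eq_of_le_of_card_ge hle h.ge)

theorem mem_of_sq_mem {H : Subgroup G} {x : G} {n : ℕ} (hn : Odd n) (hx : x ^ n = 1)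
    (h : x ^ 2 ∈ H) : x ∈ H := by
  obtain ⟨k, rfl⟩ := hn
  have : x = (x ^ 2) ^ (k + 1) := by
    rw [← pow_mul, mul_add_one, pow_succ, hx, one_mul]
  exact this ▸ pow_mem h _

end

variable {G₁ G₂ : Type*} [Group G₁] [Group G₂]

instance prod_isMulCommutative (H : Subgroup G₁) (K : Subgroup G₂) [IsMulCommutative H]
    [IsMulCommutative K] : IsMulCommutative (H.prod K) :=
  .of_setLike_mul_comm fun _ ha _ hb ↦
    Prod.ext (setLike_mul_comm ha.1 hb.1) (setLike_mul_comm ha.2 hb.2)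

@[simp]
theorem card_prod (H : Subgroup G₁) (K : Subgroup G₂) :
    Nat.card (H.prod K) = Nat.card H * Nat.card K := by
  rw [Nat.card_congr (H.prodEquiv K).toEquiv, Nat.card_prod]

theorem eq_prod_comap_inl_comap_inr {N : Subgroup (G₁ × G₂)}
    (h : ∀ x ∈ N, (x.1, 1) ∈ N ∧ (1, x.2) ∈ N) :
    N = (N.comap (MonoidHom.inl G₁ G₂)).prod (N.comap (MonoidHom.inr G₁ G₂)) := by
  ext ⟨a, b⟩
  simp only [mem_prod, mem_comap, MonoidHom.inl_apply, MonoidHom.inr_apply]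
  refine ⟨h _, fun ⟨ha, hb⟩ ↦ ?_⟩
  simpa using mul_mem ha hb

end Subgroup

open DihedralGroup Subgroup

instance rotations_normal (n : ℕ) : (rotations n).Normal := by
  constructor
  rintro _ ⟨i, rfl⟩ (j | j)
  · exact ⟨i, by simp [r_mul_r]⟩
  · exact ⟨-i, by simp [sr_mul_r, sr_mul_sr]⟩

instance rotations_isMulCommutative (n : ℕ) : IsMulCommutative (rotations n) :=
  .of_setLike_mul_comm <| by
    rintro _ ⟨i, rfl⟩ _ ⟨j, rfl⟩
    simp [r_mul_r, add_comm]

@[simp]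
theorem card_rotations (n : ℕ) : Nat.card (rotations n) = n :=
  (Nat.card_range_of_injective fun _ _ h ↦ r.inj h).trans (Nat.card_zmod n)

theorem le_rotations_of_isMulCommutative {n : ℕ} (h4 : (4 : ZMod n) ≠ 0)
    (H : Subgroup (DihedralGroup n)) [H.Normal] [IsMulCommutative H] : H ≤ rotations n := by
  rintro (i | i) hx
  · exact ⟨i, rfl⟩
  · have hconj : sr (i - 2) ∈ H := by
      convert Normal.conj_mem ‹_› _ hx (r 1) using 1
      simp [r_mul_sr, sr_mul_r]
      ring
    have hcomm := setLike_mul_comm hx hconj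
    simp only [sr_mul_sr, r.injEq] at hcomm
    exact absurd (by linear_combination -hcomm) h4

section
variable {n : ℕ} {K : Type*} [Group K]

theorem le_rotations_prod_top (h4 : (4 : ZMod n) ≠ 0) (N : Subgroup (DihedralGroup n × K))
    [hN : N.Normal] [IsMulCommutative N] : N ≤ (rotations n).prod ⊤ := by
  have := hN.map (MonoidHom.fst _ K) Prod.fst_surjective
  exact le_prod_iff.2 ⟨le_rotations_of_isMulCommutative h4 _, le_top⟩

theorem mk_one_mem_and_one_mk_mem (hn : Odd n) (hK : ∀ z : K, z ^ n = 1)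
    {N : Subgroup (DihedralGroup n × K)} [hN : N.Normal] {x : DihedralGroup n × K} (hx : x ∈ N)
    (hx₁ : x.1 ∈ rotations n) : (x.1, 1) ∈ N ∧ (1, x.2) ∈ N := by
  obtain ⟨a, z⟩ := x
  obtain ⟨i, rfl⟩ := hx₁
  have hconj : (r (-i), z) ∈ N := by
    convert hN.conj_mem _ hx (sr 0, 1) using 1
    simp [sr_mul_r, sr_mul_sr]
  constructor
  · refine mem_of_sq_mem hn (by simp) ?_
    convert mul_mem hx (inv_mem hconj) using 1
    simp [sq, r_mul_r]
  · refine mem_of_sq_mem hn (by simp [hK]) ?_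
    convert mul_mem hx hconj using 1
    simp [sq, r_mul_r]

end

section
variable {p : ℕ} [Fact p.Prime]

theorem eq_of_normal_of_isMulCommutative (hodd : Odd p)
    (N : Subgroup (DihedralGroup p × Multiplicative (ZMod p))) [N.Normal] [IsMulCommutative N] :
    N = ⊥ ∨ N = (rotations p).prod ⊥ ∨ N = (⊥ : Subgroup (DihedralGroup p)).prod ⊤ ∨
      N = (rotations p).prod ⊤ := by
  have hp : p.Prime := Fact.out
  have hle := le_rotations_prod_top (ZMod.four_ne_zero_of_odd hodd hp.ne_one) N
  have hpow (z : Multiplicative (ZMod p)) : z ^ p = 1 := by simpa using pow_card_eq_one' (x := z)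
  rw [eq_prod_comap_inl_comap_inr fun x hx ↦
    mk_one_mem_and_one_mk_mem hodd hpow hx (mem_prod.1 (hle hx)).1]
  have h₁ : N.comap (MonoidHom.inl _ _) = ⊥ ∨ N.comap (MonoidHom.inl _ _) = rotations p :=
    eq_bot_or_eq_of_le_of_prime_card (by simpa using hp) fun a ha ↦ (mem_prod.1 (hle ha)).1
  have : Fact (Nat.card (Multiplicative (ZMod p))).Prime := by simpa
  rcases h₁ with h₁ | h₁ <;>
    rcases (N.comap (MonoidHom.inr _ _)).eq_bot_or_eq_top_of_prime_card with h₂ | h₂ <;>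
    simp [h₁, h₂]

theorem card_normal_subgroups_card_eq_self (hodd : Odd p) :
    Nat.card {N : Subgroup (DihedralGroup p × Multiplicative (ZMod p)) //
      N.Normal ∧ Nat.card N = p} = 2 := by
  have hp : p.Prime := Fact.out
  have hne : (rotations p).prod (⊥ : Subgroup (Multiplicative (ZMod p))) ≠
      (⊥ : Subgroup (DihedralGroup p)).prod ⊤ := by
    intro h
    have : ((r 1, 1) : DihedralGroup p × Multiplicative (ZMod p)) ∈
        (⊥ : Subgroup (DihedralGroup p)).prod ⊤ :=
      h ▸ mem_prod.2 ⟨⟨1, rfl⟩, one_mem _⟩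
    simp only [mem_prod, mem_bot] at this
    exact one_ne_zero (r.inj (this.1.trans one_def))
  have hset : {N : Subgroup (DihedralGroup p × Multiplicative (ZMod p)) |
      N.Normal ∧ Nat.card N = p} =
      {(rotations p).prod ⊥, (⊥ : Subgroup (DihedralGroup p)).prod ⊤} := by
    ext N
    constructor
    · rintro ⟨hN, hcard⟩
      have := isCyclic_of_prime_card hcard
      rcases eq_of_normal_of_isMulCommutative hodd N with rfl | rfl | rfl | rfl
      · exact absurd hcard.symm (by simpa using hp.ne_one)
      · exact .inl rfl
      · exact .inr rfl
      · simp only [card_prod, card_rotations, card_top] at hcard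
        exact absurd ((Nat.mul_eq_left hp.ne_zero).1 (by simpa using hcard)) hp.ne_one
    · rintro (rfl | rfl) <;> exact ⟨inferInstance, by simp⟩
  rw [← Set.ncard_pair hne, ← hset, ← Nat.card_coe_set_eq]
  rfl

end

/-- In `G = D₂ₚ × ℤ/pℤ` (`p` an odd prime), a subgroup is
normal and abelian iff it is one of `{1}`, `R × {0}`, `{1} × ℤ/pℤ`,
`R × ℤ/pℤ`, where `R` is the rotation subgroup. In particular `G` has exactly
two normal subgroups of order `p`, and its normal abelian subgroups have
orders `1`, `p`, `p`, `p²`. -/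
theorem stmt_12 (p : ℕ) (hp : p.Prime) (hodd : Odd p) :
    (∀ N : Subgroup (DihedralGroup p × Multiplicative (ZMod p)),
      (N.Normal ∧ ∀ a ∈ N, ∀ b ∈ N, a * b = b * a) ↔
      (N = ⊥ ∨
       N = (rotations p).prod (⊥ : Subgroup (Multiplicative (ZMod p))) ∨
       N = (⊥ : Subgroup (DihedralGroup p)).prod
          (⊤ : Subgroup (Multiplicative (ZMod p))) ∨
       N = (rotations p).prod (⊤ : Subgroup (Multiplicative (ZMod p))))) ∧
    Nat.card {N : Subgroup (DihedralGroup p × Multiplicative (ZMod p)) //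
      N.Normal ∧ Nat.card N = p} = 2 ∧
    Nat.card ((⊥ : Subgroup (DihedralGroup p × Multiplicative (ZMod p)))) = 1 ∧
    Nat.card ((rotations p).prod (⊥ : Subgroup (Multiplicative (ZMod p)))) = p ∧
    Nat.card ((⊥ : Subgroup (DihedralGroup p)).prod
      (⊤ : Subgroup (Multiplicative (ZMod p)))) = p ∧
    Nat.card ((rotations p).prod (⊤ : Subgroup (Multiplicative (ZMod p)))) = p ^ 2 := by
  have : Fact p.Prime := ⟨hp⟩
  refine ⟨fun N ↦ ?_, card_normal_subgroups_card_eq_self hodd, card_bot, by simp, by simp,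
    by simp [sq]⟩
  rw [← isMulCommutative_iff_of_setLike]
  constructor
  · rintro ⟨hN, hcomm⟩
    exact eq_of_normal_of_isMulCommutative hodd N
  · rintro (rfl | rfl | rfl | rfl) <;> exact ⟨inferInstance, inferInstance⟩
end

section
/- Let K be a subgroup of G = D₂ₚ × ℤ/pℤ of order p which is not normal in G, and let D = D₂ₚ × {0} ≤ G. Then D ∩ K = {1} and G = D·K, i.e., every element g ∈ G can be written as g = d·κ with d ∈ D and κ ∈ K. -/
/-!
Elements of odd order in `D₂ₚ` are rotations, so a subgroup of order `p` inside `D = D₂ₚ × 1`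
is the rotation subgroup, which has index 2 in `D₂ₚ` and hence makes the subgroup normal in `G`.
So the non-normal `K` is not contained in `D`, and since `|K| = p` is prime it meets `D`
trivially. As `|D| · |K| = 2p · p = |G|`, the subgroups `D` and `K` are complements.
-/

namespace DihedralGroup

variable {n : ℕ}

theorem mem_zpowers_r_one_of_pow_eq_one [NeZero n] (hn : Odd n) {x : DihedralGroup n}
    (hx : x ^ n = 1) : x ∈ Subgroup.zpowers (r 1) := by
  cases x with
  | r i =>
    refine ⟨i.val, ?_⟩
    change r 1 ^ (i.val : ℤ) = r i
    rw [zpow_natCast, r_one_pow, ZMod.natCast_zmod_val]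
  | sr i =>
    have h2 : 2 ∣ n := orderOf_sr i ▸ orderOf_dvd_of_pow_eq_one hx
    exact absurd (even_iff_two_dvd.mpr h2) (Nat.not_even_iff_odd.mpr hn)

theorem index_zpowers_r_one [NeZero n] : (Subgroup.zpowers (r 1 : DihedralGroup n)).index = 2 := by
  have h := (Subgroup.zpowers (r 1 : DihedralGroup n)).index_mul_card
  rw [Nat.card_zpowers, orderOf_r_one, nat_card] at h
  exact Nat.eq_of_mul_eq_mul_right (Nat.pos_of_neZero n) h

instance normal_zpowers_r_one [NeZero n] : (Subgroup.zpowers (r 1 : DihedralGroup n)).Normal :=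
  Subgroup.normal_of_index_eq_two index_zpowers_r_one

theorem eq_zpowers_r_one_prod_bot_of_le [NeZero n] {H : Type*} [Group H] (hn : Odd n)
    {K : Subgroup (DihedralGroup n × H)} (hKD : K ≤ (⊤ : Subgroup (DihedralGroup n)).prod ⊥)
    (hK : Nat.card K = n) : K = (Subgroup.zpowers (r 1)).prod ⊥ := by
  have hle : K ≤ (Subgroup.zpowers (r 1)).prod ⊥ := by
    intro x hx
    have hxn : x ^ n = 1 := by
      simpa [hK] using congrArg Subtype.val (pow_card_eq_one' (x := (⟨x, hx⟩ : K)))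
    exact Subgroup.mem_prod.mpr
      ⟨mem_zpowers_r_one_of_pow_eq_one hn (congrArg Prod.fst hxn), (Subgroup.mem_prod.mp (hKD hx)).2⟩
  have hcard : Nat.card ((Subgroup.zpowers (r 1 : DihedralGroup n)).prod (⊥ : Subgroup H)) = n := by
    rw [Nat.card_congr (Subgroup.prodEquiv _ _).toEquiv, Nat.card_prod, Nat.card_zpowers,
      orderOf_r_one, Subgroup.card_bot, mul_one]
  have : Finite ((Subgroup.zpowers (r 1 : DihedralGroup n)).prod (⊥ : Subgroup H)) :=
    Nat.finite_of_card_ne_zero (hcard.trans_ne (NeZero.ne n))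
  exact Subgroup.eq_of_le_of_card_ge hle (hcard.trans hK.symm).le

end DihedralGroup

theorem Subgroup.disjoint_or_le_of_prime_card {G : Type*} [Group G] {H K : Subgroup G} [Finite K]
    (hK : (Nat.card K).Prime) : Disjoint H K ∨ K ≤ H := by
  rcases hK.eq_one_or_self_of_dvd _ (Subgroup.card_dvd_of_le (inf_le_right : H ⊓ K ≤ K)) with h | h
  · exact Or.inl (disjoint_iff.mpr (Subgroup.card_eq_one.mp h))
  · exact Or.inr ((Subgroup.eq_of_le_of_card_ge inf_le_right h.ge).symm ▸ inf_le_left)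

/-- Let `K` be a non-normal subgroup of order `p` of
`G = D₂ₚ × ℤ/pℤ` and let `D = D₂ₚ × {0}`. Then `D ∩ K = {1}` and `G = D·K`,
i.e. every `g ∈ G` can be written as `g = d·κ` with `d ∈ D`, `κ ∈ K`. -/
theorem stmt_14 (p : ℕ) (hp : p.Prime) (hodd : Odd p)
    (K : Subgroup (DihedralGroup p × Multiplicative (ZMod p)))
    (hK : Nat.card K = p) (hKn : ¬ K.Normal)
    (D : Subgroup (DihedralGroup p × Multiplicative (ZMod p)))
    (hD : D = (⊤ : Subgroup (DihedralGroup p)).prod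
      (⊥ : Subgroup (Multiplicative (ZMod p)))) :
    D ⊓ K = ⊥ ∧
    ∀ g : DihedralGroup p × Multiplicative (ZMod p),
      ∃ d ∈ D, ∃ κ ∈ K, g = d * κ := by
  have : NeZero p := ⟨hp.ne_zero⟩
  have hdisj : Disjoint D K := by
    refine (Subgroup.disjoint_or_le_of_prime_card (hK.symm ▸ hp)).resolve_right fun hKD => hKn ?_
    rw [DihedralGroup.eq_zpowers_r_one_prod_bot_of_le hodd (hD ▸ hKD) hK]
    infer_instance
  have hindex : D.index = p := by
    simp [hD, Subgroup.index_prod]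
  have hcompl : D.IsComplement' K :=
    Subgroup.isComplement'_of_card_mul_and_disjoint (by rw [← D.card_mul_index, hindex, hK]) hdisj
  refine ⟨disjoint_iff.mp hdisj, fun g => ?_⟩
  obtain ⟨⟨d, κ⟩, hg⟩ := hcompl.2 g
  exact ⟨d, d.2, κ, κ.2, hg.symm⟩
end
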